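/- arXiv:1904.09522 — 2 statements merged into one kernel-verified Lean document; each statement's English description precedes it below -/
import Mathlib

section
/- Let Δ be a topological group acting continuously on a compact topological group Π by group automorphisms, let G be a finite group with the discrete topology, and let ρ : Π → G be a continuous group homomorphism. Then there exists an open subgroup Δ₁ of Δ such that ρ(δ • g) = ρ(g) for every δ ∈ Δ₁ and every g ∈ Π. -/
/-! The set of `δ` with `ρ ∘ (δ • ·) = ρ` is a subgroup of `Δ`. Since `ρ` is locally constant,
`ρ (δ • g) = ρ g` holds on a neighbourhood of each `(1, g)` in `Δ × P`, and compactness of `P`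
(the tube lemma) yields one neighbourhood of `1` in `Δ` that works for all `g` at once. A subgroup
that is a neighbourhood of `1` is open. -/

open Topology Filter

namespace MulAction

variable {Δ X Y : Type*} [Group Δ] [MulAction Δ X]

def invariantSubgroup (f : X → Y) : Subgroup Δ where
  carrier := {δ | ∀ x, f (δ • x) = f x}
  one_mem' x := by rw [one_smul]
  mul_mem' ha hb x := by rw [mul_smul, ha, hb]
  inv_mem' {a} ha x := by rw [← ha (a⁻¹ • x), smul_inv_smul]

theorem mem_invariantSubgroup {f : X → Y} {δ : Δ} :
    δ ∈ invariantSubgroup f ↔ ∀ x, f (δ • x) = f x :=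
  Iff.rfl

variable [TopologicalSpace Δ] [TopologicalSpace X] [ContinuousSMul Δ X]

theorem _root_.IsLocallyConstant.eventually_apply_smul_eq {f : X → Y} (hf : IsLocallyConstant f)
    (x : X) : ∀ᶠ p : Δ × X in 𝓝 (1, x), f (p.1 • p.2) = f p.2 := by
  have h_smul := (hf.comp_continuous continuous_smul).eventually_eq ((1 : Δ), x)
  have h_snd := (hf.comp_continuous continuous_snd).eventually_eq ((1 : Δ), x)
  filter_upwards [h_smul, h_snd] with p hp_smul hp_snd
  simp only [Function.comp_apply, one_smul] at hp_smul hp_snd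
  rw [hp_smul, hp_snd]

theorem invariantSubgroup_mem_nhds_one [CompactSpace X] {f : X → Y}
    (hf : IsLocallyConstant f) : (invariantSubgroup (Δ := Δ) f : Set Δ) ∈ 𝓝 1 := by
  have h := isCompact_univ.eventually_forall_of_forall_eventually
    (P := fun (δ : Δ) x ↦ f (δ • x) = f x) fun x _ ↦ hf.eventually_apply_smul_eq x
  filter_upwards [h] with δ hδ x using hδ x (Set.mem_univ x)

theorem isOpen_invariantSubgroup [SeparatelyContinuousMul Δ] [CompactSpace X] {f : X → Y}
    (hf : IsLocallyConstant f) : IsOpen (invariantSubgroup (Δ := Δ) f : Set Δ) :=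
  Subgroup.isOpen_of_mem_nhds _ (invariantSubgroup_mem_nhds_one hf)

end MulAction

theorem stmt_2_general {Δ P G : Type*} [Group Δ] [TopologicalSpace Δ] [IsTopologicalGroup Δ]
    [Group P] [TopologicalSpace P] [CompactSpace P]
    [MulDistribMulAction Δ P] [ContinuousSMul Δ P]
    [Group G] [TopologicalSpace G] [DiscreteTopology G]
    (ρ : P →* G) (hρ : Continuous ρ) :
    ∃ Δ₁ : Subgroup Δ, IsOpen (Δ₁ : Set Δ) ∧
      ∀ δ ∈ Δ₁, ∀ g : P, ρ (δ • g) = ρ g :=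
  ⟨MulAction.invariantSubgroup ρ,
    MulAction.isOpen_invariantSubgroup ((IsLocallyConstant.iff_continuous ρ).2 hρ),
    fun _ hδ ↦ MulAction.mem_invariantSubgroup.1 hδ⟩

/-- Let `Δ` be a topological group acting continuously on a compact topological
group `P` by group automorphisms, `G` a finite discrete group, and `ρ : P →* G` a continuous
homomorphism. Then there is an open subgroup `Δ₁` of `Δ` such that `ρ (δ • g) = ρ g` for every
`δ ∈ Δ₁` and every `g : P`. -/
theorem stmt_2 {Δ P G : Type*} [Group Δ] [TopologicalSpace Δ] [IsTopologicalGroup Δ]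
    [Group P] [TopologicalSpace P] [IsTopologicalGroup P] [CompactSpace P]
    [MulDistribMulAction Δ P] [ContinuousSMul Δ P]
    [Group G] [Finite G] [TopologicalSpace G] [DiscreteTopology G]
    (ρ : P →* G) (hρ : Continuous ρ) :
    ∃ Δ₁ : Subgroup Δ, IsOpen (Δ₁ : Set Δ) ∧
      ∀ δ ∈ Δ₁, ∀ g : P, ρ (δ • g) = ρ g :=
  stmt_2_general ρ hρ
end

section
/- Let G be a finite group, k a field, and d ≥ 1. Let G act on the free module k[G]^d diagonally by left translation. Then: (i) the space of G-invariant elements of k[G]^d is exactly (k·N_G)^d, where N_G = ∑_{g∈G} g ∈ k[G]; (ii) the group of k[G]-module automorphisms of k[G]^d acts transitively on the nonzero G-invariant elements. Consequently, for any two injective k[G]-module homomorphisms j₁, j₂ from the trivial one-dimensional module k into k[G]^d, there is a k[G]-module automorphism α of k[G]^d with α ∘ j₁ = j₂, and the quotient modules k[G]^d / j₁(k) and k[G]^d / j₂(k) are isomorphic as k[G]-modules. -/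
/-!
Comparing the coefficients of `x` and `g x` at `g` shows that a `G`-invariant element of `k[G]`
has constant coefficients, i.e. lies in `k · N_G`; so the invariants of `k[G]^d` are the vectors
`c • N_G` with `c ∈ k^d`. An invertible matrix over `k` acting on `k[G]^d` by right multiplication
is `k[G]`-linear, its entries being central, and it sends `c • N_G` to `(c P) • N_G`; since `GL_d(k)`
is transitive on `k^d ∖ {0}`, this gives transitivity on nonzero invariants. Finally a `k`-linear
map out of `k` is determined by the image of `1`.
-/

open Matrix

theorem exists_linearEquiv_apply_eq {K V : Type*} [DivisionRing K] [AddCommGroup V] [Module K V]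
    {x y : V} (hx : x ≠ 0) (hy : y ≠ 0) : ∃ g : V ≃ₗ[K] V, g x = y := by
  obtain ⟨g, hg⟩ := Submodule.exists_linearEquiv_restrict_eq
    (LinearEquiv.coord K V x hx ≪≫ₗ LinearEquiv.toSpanNonzeroSingleton K V y hy)
  refine ⟨g, ?_⟩
  simpa [LinearEquiv.coord_self] using (hg ⟨x, Submodule.mem_span_singleton_self x⟩).symm

theorem Matrix.vecMul_map_algebraMap_smul {k A ι κ : Type*} [CommSemiring k] [Semiring A]
    [Algebra k A] [Fintype ι] (c : ι → k) (z : A) (P : Matrix ι κ k) :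
    (fun i => c i • z) ᵥ* P.map (algebraMap k A) = fun j => (c ᵥ* P) j • z := by
  ext j
  simp only [vecMul, dotProduct, map_apply, ← Algebra.commutes, ← Algebra.smul_def, smul_smul,
    ← Finset.sum_smul, mul_comm (P _ j)]

theorem LinearEquiv.exists_pi_smul_eq {k A ι : Type*} [CommSemiring k] [Semiring A] [Algebra k A]
    [Fintype ι] [DecidableEq ι] (f : (ι → k) ≃ₗ[k] (ι → k)) (z : A) :
    ∃ α : (ι → A) ≃ₗ[A] (ι → A), ∀ c : ι → k, α (fun i => c i • z) = fun i => f c i • z := by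
  set P := LinearMap.toMatrixRight' (f : (ι → k) →ₗ[k] (ι → k))
  set Q := LinearMap.toMatrixRight' (f.symm : (ι → k) →ₗ[k] (ι → k))
  have hPQ : P * Q = 1 := by
    rw [← LinearMap.toMatrixRight'_comp, LinearEquiv.comp_coe, f.self_trans_symm]
    exact LinearMap.toMatrixRight'_id
  have hQP : Q * P = 1 := by
    rw [← LinearMap.toMatrixRight'_comp, LinearEquiv.comp_coe, f.symm_trans_self]
    exact LinearMap.toMatrixRight'_id
  refine ⟨toLinearEquivRight'OfInv (M := Q.map (algebraMap k A)) (M' := P.map (algebraMap k A))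
    (by rw [← Matrix.map_mul, hQP, Matrix.map_one _ (map_zero _) (map_one _)])
    (by rw [← Matrix.map_mul, hPQ, Matrix.map_one _ (map_zero _) (map_one _)]), fun c => ?_⟩
  change (fun i => c i • z) ᵥ* P.map (algebraMap k A) = _
  rw [vecMul_map_algebraMap_smul, ← Matrix.toLinearMapRight'_apply, Matrix.toLinearMapRight',
    LinearEquiv.symm_apply_apply]
  rfl

theorem exists_linearEquiv_pi_smul_eq {k A ι : Type*} [Field k] [Semiring A] [Algebra k A]
    [Fintype ι] [DecidableEq ι] {c c' : ι → k} (hc : c ≠ 0) (hc' : c' ≠ 0) (z : A) :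
    ∃ α : (ι → A) ≃ₗ[A] (ι → A), α (fun i => c i • z) = fun i => c' i • z := by
  obtain ⟨f, rfl⟩ := exists_linearEquiv_apply_eq (K := k) hc hc'
  obtain ⟨α, hα⟩ := f.exists_pi_smul_eq z
  exact ⟨α, hα c⟩

theorem LinearEquiv.apply_eq_of_apply_one_eq {k A M : Type*} [CommSemiring k] [Semiring A]
    [Algebra k A] [AddCommMonoid M] [Module A M] [Module k M] [IsScalarTower k A M]
    (α : M ≃ₗ[A] M) {j₁ j₂ : k →ₗ[k] M} (h : α (j₁ 1) = j₂ 1) (c : k) : α (j₁ c) = j₂ c :=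
  LinearMap.congr_fun (LinearMap.ext_ring (f := (α.restrictScalars k).toLinearMap ∘ₗ j₁) h) c

def LinearEquiv.quotientSpanRangeCongr {A M M' ι : Type*} [Ring A] [AddCommGroup M]
    [AddCommGroup M'] [Module A M] [Module A M'] (α : M ≃ₗ[A] M') {f₁ : ι → M} {f₂ : ι → M'}
    (h : ∀ i, α (f₁ i) = f₂ i) :
    (M ⧸ Submodule.span A (Set.range f₁)) ≃ₗ[A] (M' ⧸ Submodule.span A (Set.range f₂)) :=
  Submodule.Quotient.equiv _ _ α <| by
    rw [Submodule.map_span, ← Set.range_comp]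
    exact congrArg _ (congrArg _ (funext h))

namespace MonoidAlgebra

variable {k G : Type*} [CommSemiring k] [Group G] [Fintype G]

theorem of_mul_sum_of (g : G) : of k G g * ∑ h, of k G h = ∑ h, of k G h := by
  rw [Finset.mul_sum]
  exact Fintype.sum_equiv (Equiv.mulLeft g) _ _ fun h => (map_mul (of k G) g h).symm

theorem coeff_sum_of (h : G) : (∑ g, of k G g).coeff h = 1 := by
  classical
  simp [coeff_sum, Finset.sum_apply', of_apply, coeff_single, Finsupp.single_apply]

theorem forall_of_mul_eq_self_iff (x : MonoidAlgebra k G) :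
    (∀ g, of k G g * x = x) ↔ ∃ c : k, x = c • ∑ g, of k G g := by
  constructor
  · intro hx
    refine ⟨x.coeff 1, coeff_injective (Finsupp.ext fun h => ?_)⟩
    have hxh := congrArg (fun y => y.coeff h) (hx h)
    simp only [of_apply, coeff_single_mul_apply, one_mul, inv_mul_cancel] at hxh
    rw [coeff_smul_apply, coeff_sum_of, smul_eq_mul, mul_one, ← hxh]
  · rintro ⟨c, rfl⟩ g
    rw [mul_smul_comm, of_mul_sum_of]

theorem forall_of_mul_pi_eq_self_iff {ι : Type*} (v : ι → MonoidAlgebra k G) :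
    (∀ g, (fun i => of k G g * v i) = v) ↔ ∃ c : ι → k, v = fun i => c i • ∑ g, of k G g := by
  simp only [funext_iff]
  rw [forall_comm]
  simp only [forall_of_mul_eq_self_iff]
  exact Classical.skolem

end MonoidAlgebra

theorem MonoidAlgebra.exists_linearEquiv_apply_eq_of_invariant {k G ι : Type*} [Field k] [Group G]
    [Fintype G] [Fintype ι] [DecidableEq ι] {v w : ι → MonoidAlgebra k G}
    (hv : ∀ g, (fun i => of k G g * v i) = v) (hw : ∀ g, (fun i => of k G g * w i) = w)
    (hv0 : v ≠ 0) (hw0 : w ≠ 0) :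
    ∃ α : (ι → MonoidAlgebra k G) ≃ₗ[MonoidAlgebra k G] (ι → MonoidAlgebra k G), α v = w := by
  obtain ⟨c, rfl⟩ := (forall_of_mul_pi_eq_self_iff v).mp hv
  obtain ⟨c', rfl⟩ := (forall_of_mul_pi_eq_self_iff w).mp hw
  exact exists_linearEquiv_pi_smul_eq (by rintro rfl; exact hv0 (by ext; simp))
    (by rintro rfl; exact hw0 (by ext; simp)) _

theorem stmt_8_general (k : Type*) [Field k] (G : Type*) [Group G] [Fintype G] (d : ℕ) :
    (∀ v : Fin d → MonoidAlgebra k G,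
      (∀ g : G, (fun i => MonoidAlgebra.of k G g * v i) = v) ↔
        ∃ c : Fin d → k,
          v = fun i => c i • (Finset.univ.sum fun g : G => MonoidAlgebra.of k G g)) ∧
    (∀ v w : Fin d → MonoidAlgebra k G,
      (∀ g : G, (fun i => MonoidAlgebra.of k G g * v i) = v) →
      (∀ g : G, (fun i => MonoidAlgebra.of k G g * w i) = w) →
      v ≠ 0 → w ≠ 0 →
      ∃ α : (Fin d → MonoidAlgebra k G) ≃ₗ[MonoidAlgebra k G] (Fin d → MonoidAlgebra k G),
        α v = w) ∧
    (∀ j₁ j₂ : k →ₗ[k] (Fin d → MonoidAlgebra k G),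
      Function.Injective j₁ → Function.Injective j₂ →
      (∀ (c : k) (g : G), (fun i => MonoidAlgebra.of k G g * j₁ c i) = j₁ c) →
      (∀ (c : k) (g : G), (fun i => MonoidAlgebra.of k G g * j₂ c i) = j₂ c) →
      ∃ α : (Fin d → MonoidAlgebra k G) ≃ₗ[MonoidAlgebra k G] (Fin d → MonoidAlgebra k G),
        (∀ c : k, α (j₁ c) = j₂ c) ∧
        Nonempty
          (((Fin d → MonoidAlgebra k G) ⧸
              Submodule.span (MonoidAlgebra k G) (Set.range j₁)) ≃ₗ[MonoidAlgebra k G]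
            ((Fin d → MonoidAlgebra k G) ⧸
              Submodule.span (MonoidAlgebra k G) (Set.range j₂)))) := by
  refine ⟨MonoidAlgebra.forall_of_mul_pi_eq_self_iff,
    fun _ _ => MonoidAlgebra.exists_linearEquiv_apply_eq_of_invariant,
    fun j₁ j₂ hj₁ hj₂ hinv₁ hinv₂ => ?_⟩
  obtain ⟨α, hα⟩ := MonoidAlgebra.exists_linearEquiv_apply_eq_of_invariant (hinv₁ 1) (hinv₂ 1)
    ((map_ne_zero_iff j₁ hj₁).2 one_ne_zero) ((map_ne_zero_iff j₂ hj₂).2 one_ne_zero)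
  have hαj := α.apply_eq_of_apply_one_eq hα
  exact ⟨α, hαj, ⟨α.quotientSpanRangeCongr hαj⟩⟩

/-- Let `G` be a finite group, `k` a field, `d ≥ 1`, and let `G` act diagonally by
left translation on `k[G]^d`.  Then (i) the `G`-invariants of `k[G]^d` are exactly `(k·N_G)^d`
where `N_G = ∑_{g∈G} g`; (ii) the `k[G]`-module automorphisms of `k[G]^d` act transitively on
the nonzero invariant elements; consequently, for any two injective `k[G]`-homomorphisms
`j₁, j₂` from the trivial one-dimensional module `k` into `k[G]^d` (i.e. injective `k`-linear
maps with invariant image), there is an automorphism `α` with `α ∘ j₁ = j₂`, and the quotients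
`k[G]^d / j₁(k)` and `k[G]^d / j₂(k)` are isomorphic as `k[G]`-modules. -/
theorem stmt_8 (k : Type*) [Field k] (G : Type*) [Group G] [Fintype G] (d : ℕ) (hd : 1 ≤ d) :
    (∀ v : Fin d → MonoidAlgebra k G,
      (∀ g : G, (fun i => MonoidAlgebra.of k G g * v i) = v) ↔
        ∃ c : Fin d → k,
          v = fun i => c i • (Finset.univ.sum fun g : G => MonoidAlgebra.of k G g)) ∧
    (∀ v w : Fin d → MonoidAlgebra k G,
      (∀ g : G, (fun i => MonoidAlgebra.of k G g * v i) = v) →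
      (∀ g : G, (fun i => MonoidAlgebra.of k G g * w i) = w) →
      v ≠ 0 → w ≠ 0 →
      ∃ α : (Fin d → MonoidAlgebra k G) ≃ₗ[MonoidAlgebra k G] (Fin d → MonoidAlgebra k G),
        α v = w) ∧
    (∀ j₁ j₂ : k →ₗ[k] (Fin d → MonoidAlgebra k G),
      Function.Injective j₁ → Function.Injective j₂ →
      (∀ (c : k) (g : G), (fun i => MonoidAlgebra.of k G g * j₁ c i) = j₁ c) →
      (∀ (c : k) (g : G), (fun i => MonoidAlgebra.of k G g * j₂ c i) = j₂ c) →
      ∃ α : (Fin d → MonoidAlgebra k G) ≃ₗ[MonoidAlgebra k G] (Fin d → MonoidAlgebra k G),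
        (∀ c : k, α (j₁ c) = j₂ c) ∧
        Nonempty
          (((Fin d → MonoidAlgebra k G) ⧸
              Submodule.span (MonoidAlgebra k G) (Set.range j₁)) ≃ₗ[MonoidAlgebra k G]
            ((Fin d → MonoidAlgebra k G) ⧸
              Submodule.span (MonoidAlgebra k G) (Set.range j₂)))) :=
  stmt_8_general k G d
end
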